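/- arXiv:2305.18285 — 3 statements merged into one kernel-verified Lean document; each statement's English description precedes it below -/
import Mathlib

section
/- Let f(θ, w) = φ(θ) + (1/2)‖Aθ + Bw − y‖² where φ is convex and L_φ-smooth, and set F(θ) = ∇φ(θ) + Aᵀ(Aθ + B w*(θ) − y) with w*(θ) = B†(y − Aθ). Then F is (1/(2 max(L_φ, L̂)))-cocoercive, where L̂ = ‖Aᵀ(I − B B†)A‖ is the operator norm. -/
/-!
`F` is `∇φ` plus the affine map `θ ↦ Aᵀ P (Aθ - y)` with `P = I - B B†`. Since `P` is a symmetric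
idempotent, `Aᵀ P A = (P A)ᵀ (P A)` has the form `S* S`, and `S* S` is `1/‖S* S‖`-cocoercive because
`‖S* S x‖² ≤ ‖S‖² ‖S x‖² = ‖S* S‖ ⟪S* S x, x⟫`. By Baillon–Haddad `∇φ` is `1/L_φ`-cocoercive, so both
summands are `1/max(L_φ, L̂)`-cocoercive, and `‖a + b‖² ≤ 2‖a‖² + 2‖b‖²` costs the factor `2`.
-/

open Matrix

open scoped RealInnerProductSpace

section Cocoercive

variable {E : Type*} [NormedAddCommGroup E] [InnerProductSpace ℝ E]

def Cocoercive (β : ℝ) (F : E → E) : Prop :=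
  ∀ x y, β * ‖F x - F y‖ ^ 2 ≤ ⟪F x - F y, x - y⟫

namespace Cocoercive

variable {β β' : ℝ} {F G : E → E}

theorem mono (hF : Cocoercive β F) (h : β' ≤ β) : Cocoercive β' F := fun x y =>
  (mul_le_mul_of_nonneg_right h (sq_nonneg _)).trans (hF x y)

theorem sub_const (hF : Cocoercive β F) (c : E) : Cocoercive β fun x => F x - c := by
  intro x y
  simpa only [sub_sub_sub_cancel_right] using hF x y

theorem add (hβ : 0 ≤ β) (hF : Cocoercive β F) (hG : Cocoercive β G) :
    Cocoercive (β / 2) (F + G) := by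
  intro x y
  have hsq : ‖(F x - F y) + (G x - G y)‖ ^ 2 ≤ 2 * (‖F x - F y‖ ^ 2 + ‖G x - G y‖ ^ 2) :=
    (pow_le_pow_left₀ (norm_nonneg _) (norm_add_le _ _) 2).trans add_sq_le
  calc β / 2 * ‖(F + G) x - (F + G) y‖ ^ 2
      = β / 2 * ‖(F x - F y) + (G x - G y)‖ ^ 2 := by
        rw [Pi.add_apply, Pi.add_apply, add_sub_add_comm]
    _ ≤ β * ‖F x - F y‖ ^ 2 + β * ‖G x - G y‖ ^ 2 := by nlinarith
    _ ≤ ⟪F x - F y, x - y⟫ + ⟪G x - G y, x - y⟫ := add_le_add (hF x y) (hG x y)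
    _ = ⟪(F + G) x - (F + G) y, x - y⟫ := by
      rw [← inner_add_left, Pi.add_apply, Pi.add_apply, add_sub_add_comm]

end Cocoercive

end Cocoercive

section Gradient

variable {E : Type*} [NormedAddCommGroup E] [InnerProductSpace ℝ E] [CompleteSpace E]
  {f : E → ℝ} {g : E → E}

theorem HasGradientAt.hasDerivAt_comp_lineMap {x z g₀ : E} {t : ℝ}
    (h : HasGradientAt f g₀ (AffineMap.lineMap x z t)) :
    HasDerivAt (fun s : ℝ => f (AffineMap.lineMap x z s)) ⟪g₀, z - x⟫ t :=
  (hasGradientAt_iff_hasFDerivAt.1 h).comp_hasDerivAt t AffineMap.hasDerivAt_lineMap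

theorem ConvexOn.add_inner_gradient_le (hf : ConvexOn ℝ Set.univ f) {x g₀ : E}
    (hg : HasGradientAt f g₀ x) (z : E) : f x + ⟪g₀, z - x⟫ ≤ f z := by
  have hconv : ConvexOn ℝ Set.univ fun s : ℝ => f (AffineMap.lineMap x z s) :=
    hf.comp_affineMap (AffineMap.lineMap x z)
  have hderiv := HasGradientAt.hasDerivAt_comp_lineMap (z := z) (t := 0) (by simpa using hg)
  have hslope := hconv.le_slope_of_hasDerivAt (Set.mem_univ 0) (Set.mem_univ 1) one_pos hderiv
  simp only [slope_def_field, AffineMap.lineMap_apply_one, AffineMap.lineMap_apply_zero] at hslope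
  linarith

theorem le_add_inner_gradient_add_sq (hg : ∀ x, HasGradientAt f (g x) x) {L : ℝ}
    (hlip : ∀ a b, ‖g a - g b‖ ≤ L * ‖a - b‖) (x z : E) :
    f z ≤ f x + ⟪g x, z - x⟫ + L / 2 * ‖z - x‖ ^ 2 := by
  set v := z - x
  let ψ : ℝ → ℝ := fun t => f (AffineMap.lineMap x z t) - t * ⟪g x, v⟫ - L / 2 * t ^ 2 * ‖v‖ ^ 2
  have hψ : ∀ t, HasDerivAt ψ (⟪g (AffineMap.lineMap x z t) - g x, v⟫ - L * t * ‖v‖ ^ 2) t := by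
    intro t
    refine ((((hg _).hasDerivAt_comp_lineMap (x := x) (z := z)).sub
      ((hasDerivAt_id t).mul_const ⟪g x, v⟫)).sub
      (((hasDerivAt_pow 2 t).const_mul (L / 2)).mul_const (‖v‖ ^ 2))).congr_deriv ?_
    rw [inner_sub_left]
    norm_num
    ring
  have hψ_nonpos : ∀ t ∈ interior (Set.Ici (0 : ℝ)),
      ⟪g (AffineMap.lineMap x z t) - g x, v⟫ - L * t * ‖v‖ ^ 2 ≤ 0 := by
    intro t ht
    rw [interior_Ici] at ht
    have hstep : AffineMap.lineMap x z t - x = t • v := AffineMap.lineMap_vsub_left x z t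
    calc ⟪g (AffineMap.lineMap x z t) - g x, v⟫ - L * t * ‖v‖ ^ 2
        ≤ L * ‖AffineMap.lineMap x z t - x‖ * ‖v‖ - L * t * ‖v‖ ^ 2 := by
          gcongr
          exact (real_inner_le_norm _ _).trans
            (mul_le_mul_of_nonneg_right (hlip _ _) (norm_nonneg v))
      _ = 0 := by
          rw [hstep, norm_smul, Real.norm_of_nonneg ht.le]
          ring
  have hanti : AntitoneOn ψ (Set.Ici 0) :=
    antitoneOn_of_hasDerivWithinAt_nonpos (convex_Ici 0)
      (continuous_iff_continuousAt.2 fun t => (hψ t).continuousAt).continuousOn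
      (fun t _ => (hψ t).hasDerivWithinAt) hψ_nonpos
  have hψ_le := hanti Set.self_mem_Ici (Set.mem_Ici.2 zero_le_one) zero_le_one
  simp only [ψ, AffineMap.lineMap_apply_one, AffineMap.lineMap_apply_zero] at hψ_le
  linarith

theorem ConvexOn.sq_norm_gradient_sub_div_le (hf : ConvexOn ℝ Set.univ f)
    (hg : ∀ x, HasGradientAt f (g x) x) {L : ℝ} (hL : 0 < L)
    (hlip : ∀ a b, ‖g a - g b‖ ≤ L * ‖a - b‖) (x₁ x₂ : E) :
    ‖g x₁ - g x₂‖ ^ 2 / (2 * L) ≤ f x₁ - f x₂ - ⟪g x₂, x₁ - x₂⟫ := by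
  set G := g x₁ - g x₂
  -- compare, at `z`, the supporting hyperplane at `x₂` with the descent lemma from `x₁`
  set z := x₁ - L⁻¹ • G
  have hlower := hf.add_inner_gradient_le (hg x₂) z
  have hupper := le_add_inner_gradient_add_sq hg hlip x₁ z
  have hz₂ : z - x₂ = (x₁ - x₂) - L⁻¹ • G := sub_right_comm _ _ _
  have hz₁ : z - x₁ = -(L⁻¹ • G) := sub_sub_cancel_left _ _
  rw [hz₂, inner_sub_right, real_inner_smul_right] at hlower
  rw [hz₁, inner_neg_right, real_inner_smul_right, norm_neg, norm_smul, mul_pow,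
    Real.norm_of_nonneg (inv_nonneg.2 hL.le)] at hupper
  have hG : L⁻¹ * ⟪g x₁, G⟫ - L⁻¹ * ⟪g x₂, G⟫ = L⁻¹ * ‖G‖ ^ 2 := by
    rw [← mul_sub, ← inner_sub_left, real_inner_self_eq_norm_sq]
  have hstep : L / 2 * (L⁻¹ ^ 2 * ‖G‖ ^ 2) = ‖G‖ ^ 2 / (2 * L) := by field_simp
  have hgain : L⁻¹ * ‖G‖ ^ 2 = 2 * (‖G‖ ^ 2 / (2 * L)) := by field_simp
  linarith

theorem ConvexOn.cocoercive_gradient (hf : ConvexOn ℝ Set.univ f)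
    (hg : ∀ x, HasGradientAt f (g x) x) {L : ℝ} (hL : 0 < L)
    (hlip : ∀ a b, ‖g a - g b‖ ≤ L * ‖a - b‖) : Cocoercive (1 / L) g := by
  intro x₁ x₂
  have h₁₂ := hf.sq_norm_gradient_sub_div_le hg hL hlip x₁ x₂
  have h₂₁ := hf.sq_norm_gradient_sub_div_le hg hL hlip x₂ x₁
  rw [norm_sub_rev] at h₂₁
  have hsplit : ⟪g x₁ - g x₂, x₁ - x₂⟫ =
      (f x₁ - f x₂ - ⟪g x₂, x₁ - x₂⟫) + (f x₂ - f x₁ - ⟪g x₁, x₂ - x₁⟫) := by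
    rw [← neg_sub x₁ x₂, inner_neg_right, inner_sub_left]
    ring
  have hhalf : 1 / L * ‖g x₁ - g x₂‖ ^ 2 = 2 * (‖g x₁ - g x₂‖ ^ 2 / (2 * L)) := by field_simp
  linarith

end Gradient

section Adjoint

variable {E F : Type*} [NormedAddCommGroup E] [InnerProductSpace ℝ E] [CompleteSpace E]
  [NormedAddCommGroup F] [InnerProductSpace ℝ F] [CompleteSpace F]

open ContinuousLinearMap in
theorem ContinuousLinearMap.cocoercive_adjoint_comp_self (S : E →L[ℝ] F) {L : ℝ}
    (hL : ‖adjoint S ∘L S‖ ≤ L) : Cocoercive (1 / L) (adjoint S ∘L S) := by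
  intro x y
  set T := adjoint S ∘L S
  set u := x - y
  have hquad : ⟪T x - T y, u⟫ = ‖S u‖ ^ 2 := by
    rw [← map_sub, comp_apply, adjoint_inner_left, real_inner_self_eq_norm_sq]
  have hnorm : ‖T x - T y‖ ^ 2 ≤ ‖T‖ * ‖S u‖ ^ 2 := by
    rw [← map_sub, norm_adjoint_comp_self, comp_apply]
    calc ‖adjoint S (S u)‖ ^ 2 ≤ (‖adjoint S‖ * ‖S u‖) ^ 2 := by
          gcongr
          exact (adjoint S).le_opNorm (S u)
      _ = ‖S‖ * ‖S‖ * ‖S u‖ ^ 2 := by rw [LinearIsometryEquiv.norm_map]; ring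
  have hratio : 1 / L * ‖T‖ ≤ 1 := by
    rw [one_div_mul_eq_div]
    exact div_le_one_of_le₀ hL ((norm_nonneg _).trans hL)
  calc 1 / L * ‖T x - T y‖ ^ 2 ≤ 1 / L * (‖T‖ * ‖S u‖ ^ 2) := by
        gcongr
        exact one_div_nonneg.2 ((norm_nonneg _).trans hL)
    _ = (1 / L * ‖T‖) * ‖S u‖ ^ 2 := by ring
    _ ≤ ‖S u‖ ^ 2 := mul_le_of_le_one_left (sq_nonneg _) hratio
    _ = ⟪T x - T y, u⟫ := hquad.symm

end Adjoint

theorem Matrix.transpose_mul_mul_eq_of_isSymm_of_isIdempotentElem {m n R : Type*} [Fintype m]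
    [CommSemiring R] {P : Matrix m m R} (hsymm : P.IsSymm) (hidem : IsIdempotentElem P)
    (A : Matrix m n R) : Aᵀ * P * A = (P * A)ᵀ * (P * A) := by
  rw [transpose_mul, hsymm.eq, Matrix.mul_assoc, Matrix.mul_assoc, ← Matrix.mul_assoc P P A,
    hidem.eq]

theorem Matrix.toEuclideanCLM_conjTranspose_mul_self {m n 𝕜 : Type*} [RCLike 𝕜] [Fintype m]
    [Fintype n] [DecidableEq m] [DecidableEq n] (C : Matrix m n 𝕜) :
    toEuclideanCLM (𝕜 := 𝕜) (Cᴴ * C) =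
      ContinuousLinearMap.adjoint (LinearMap.toContinuousLinearMap (toEuclideanLin C)) ∘L
        LinearMap.toContinuousLinearMap (toEuclideanLin C) := by
  rw [← LinearMap.adjoint_toContinuousLinearMap, ← toEuclideanLin_conjTranspose_eq_adjoint]
  ext1 x
  exact congrArg (WithLp.toLp 2) (mulVec_mulVec _ _ _).symm

theorem Matrix.transpose_mulVec_residual {m n k R : Type*} [Fintype m] [Fintype n] [Fintype k]
    [DecidableEq m] [CommRing R] (A : Matrix m n R) (B : Matrix m k R) (Bd : Matrix k m R)
    (y : m → R) (θ : n → R) :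
    Aᵀ *ᵥ (A *ᵥ θ + B *ᵥ Bd *ᵥ (y - A *ᵥ θ) - y) =
      (Aᵀ * (1 - B * Bd) * A) *ᵥ θ - Aᵀ *ᵥ (1 - B * Bd) *ᵥ y := by
  have hresidual : A *ᵥ θ + B *ᵥ Bd *ᵥ (y - A *ᵥ θ) - y = (1 - B * Bd) *ᵥ (A *ᵥ θ - y) := by
    simp only [sub_mulVec, one_mulVec, ← mulVec_mulVec, mulVec_sub]
    abel
  rw [hresidual, mulVec_sub, mulVec_sub, ← mulVec_mulVec, ← mulVec_mulVec]

theorem stmt6_general {n d k : ℕ} (Lφ : ℝ) (hLφ : 0 < Lφ)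
    (A : Matrix (Fin n) (Fin d) ℝ) (B : Matrix (Fin n) (Fin k) ℝ)
    (Bd : Matrix (Fin k) (Fin n) ℝ) (y : Fin n → ℝ)
    (h1 : B * Bd * B = B)
    (h3 : (B * Bd)ᵀ = B * Bd)
    (φ : EuclideanSpace ℝ (Fin d) → ℝ)
    (gφ : EuclideanSpace ℝ (Fin d) → EuclideanSpace ℝ (Fin d))
    (hconv : ConvexOn ℝ Set.univ φ)
    (hgφ : ∀ x, HasGradientAt φ (gφ x) x)
    (hlip : ∀ x₁ x₂, ‖gφ x₁ - gφ x₂‖ ≤ Lφ * ‖x₁ - x₂‖)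
    (wstar : (Fin d → ℝ) → (Fin k → ℝ))
    (hw : ∀ θ, wstar θ = Bd *ᵥ (y - A *ᵥ θ))
    (F : EuclideanSpace ℝ (Fin d) → EuclideanSpace ℝ (Fin d))
    (hF : ∀ θ, F θ = gφ θ + (show EuclideanSpace ℝ (Fin d) from WithLp.toLp 2 (Aᵀ *ᵥ (A *ᵥ θ + B *ᵥ wstar θ - y))))
    (Lhat : ℝ)
    (hLhat : Lhat = ‖(Matrix.toEuclideanCLM (𝕜 := ℝ) (Aᵀ * (1 - B * Bd) * A) :
      EuclideanSpace ℝ (Fin d) →L[ℝ] EuclideanSpace ℝ (Fin d))‖) :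
    ∀ θ₁ θ₂, ⟪F θ₁ - F θ₂, θ₁ - θ₂⟫ ≥
      (1 / (2 * max Lφ Lhat)) * ‖F θ₁ - F θ₂‖ ^ 2 := by
  set P : Matrix (Fin n) (Fin n) ℝ := 1 - B * Bd
  set S := LinearMap.toContinuousLinearMap (toEuclideanLin (P * A))
  set m := max Lφ Lhat
  have hP_symm : P.IsSymm := by rw [IsSymm, transpose_sub, transpose_one, h3]
  have hP_idem : IsIdempotentElem P :=
    IsIdempotentElem.one_sub (by rw [IsIdempotentElem, ← Matrix.mul_assoc, h1])
  have hT : toEuclideanCLM (𝕜 := ℝ) (Aᵀ * P * A) = ContinuousLinearMap.adjoint S ∘L S := by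
    rw [transpose_mul_mul_eq_of_isSymm_of_isIdempotentElem hP_symm hP_idem,
      ← conjTranspose_eq_transpose_of_trivial, toEuclideanCLM_conjTranspose_mul_self]
  have hF_affine :
      F = gφ + fun θ => toEuclideanCLM (𝕜 := ℝ) (Aᵀ * P * A) θ - WithLp.toLp 2 (Aᵀ *ᵥ P *ᵥ y) := by
    funext θ
    rw [hF, hw]
    exact congrArg (gφ θ + ·) (congrArg (WithLp.toLp 2) (transpose_mulVec_residual A B Bd y θ))
  have hgrad : Cocoercive (1 / m) gφ :=
    (hconv.cocoercive_gradient hgφ hLφ hlip).mono (one_div_le_one_div_of_le hLφ (le_max_left _ _))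
  have hlin : Cocoercive (1 / m) (toEuclideanCLM (𝕜 := ℝ) (Aᵀ * P * A)) := by
    rw [hT]
    exact S.cocoercive_adjoint_comp_self (by rw [← hT, ← hLhat]; exact le_max_right _ _)
  rw [hF_affine]
  exact (hgrad.add (by positivity) (hlin.sub_const _)).mono (le_of_eq (by ring))

/-- For f(θ, w) = φ(θ) + (1/2)‖Aθ + Bw − y‖² with φ convex and L_φ-smooth, the operator
F(θ) = ∇φ(θ) + Aᵀ(Aθ + B w*(θ) − y), w*(θ) = B†(y − Aθ), is
(1/(2 max(L_φ, L̂)))-cocoercive, where L̂ = ‖Aᵀ(I − B B†)A‖. -/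
theorem stmt6 {n d k : ℕ} (Lφ : ℝ) (hLφ : 0 < Lφ)
    (A : Matrix (Fin n) (Fin d) ℝ) (B : Matrix (Fin n) (Fin k) ℝ)
    (Bd : Matrix (Fin k) (Fin n) ℝ) (y : Fin n → ℝ)
    (h1 : B * Bd * B = B) (h2 : Bd * B * Bd = Bd)
    (h3 : (B * Bd)ᵀ = B * Bd) (h4 : (Bd * B)ᵀ = Bd * B)
    (φ : EuclideanSpace ℝ (Fin d) → ℝ)
    (gφ : EuclideanSpace ℝ (Fin d) → EuclideanSpace ℝ (Fin d))
    (hconv : ConvexOn ℝ Set.univ φ)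
    (hgφ : ∀ x, HasGradientAt φ (gφ x) x)
    (hlip : ∀ x₁ x₂, ‖gφ x₁ - gφ x₂‖ ≤ Lφ * ‖x₁ - x₂‖)
    (wstar : (Fin d → ℝ) → (Fin k → ℝ))
    (hw : ∀ θ, wstar θ = Bd *ᵥ (y - A *ᵥ θ))
    (F : EuclideanSpace ℝ (Fin d) → EuclideanSpace ℝ (Fin d))
    (hF : ∀ θ, F θ = gφ θ + (show EuclideanSpace ℝ (Fin d) from WithLp.toLp 2 (Aᵀ *ᵥ (A *ᵥ θ + B *ᵥ wstar θ - y))))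
    (Lhat : ℝ)
    (hLhat : Lhat = ‖(Matrix.toEuclideanCLM (𝕜 := ℝ) (Aᵀ * (1 - B * Bd) * A) :
      EuclideanSpace ℝ (Fin d) →L[ℝ] EuclideanSpace ℝ (Fin d))‖) :
    ∀ θ₁ θ₂, ⟪F θ₁ - F θ₂, θ₁ - θ₂⟫ ≥
      (1 / (2 * max Lφ Lhat)) * ‖F θ₁ - F θ₂‖ ^ 2 :=
  stmt6_general Lφ hLφ A B Bd y h1 h3 φ gφ hconv hgφ hlip wstar hw F hF Lhat hLhat
end

section
/- Suppose f(θ, w) is twice differentiable, μ-strongly convex and L-smooth in θ, with ‖∇²₁₂ f(θ, w)‖ ≤ C₁ and ‖∇_θ w*(θ)‖ ≤ C₂ where C₁C₂ ≤ μ/2. Then the operator F(θ) = ∇₁ f(θ, w*(θ)) has Jacobian ∇_θ F(θ) = ∇²₁₁ f(θ, w*(θ)) + ∇_θ w*(θ) ∇²₁₂ f(θ, w*(θ)) satisfying (μ/2) I ⪯ ∇_θ F(θ) ⪯ 2L · I, hence F is (μ/2)-strongly monotone and (2L)-Lipschitz. -/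
/-!
By the chain rule along the graph `θ ↦ (θ, w*(θ))`, the Jacobian of `F` is
`∇²₁₁ f + ∇²₁₂ f ∘ ∇w*`. The cross term has operator norm at most `C₁ C₂ ≤ μ / 2`, so it moves
the quadratic form of `∇²₁₁ f`, which lies between `μ` and `L`, by at most `μ / 2`; and being
symmetric, `∇²₁₁ f` has operator norm equal to the supremum of its Rayleigh quotient, hence at
most `L`. The mean value theorem along segments turns these pointwise bounds on the Jacobian into
strong monotonicity and Lipschitz continuity of `F`.
-/

open scoped RealInnerProductSpace

namespace ContinuousLinearMap

variable {E : Type*} [NormedAddCommGroup E] [InnerProductSpace ℝ E]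

theorem abs_inner_apply_self_le (T : E →L[ℝ] E) (v : E) : |⟪T v, v⟫| ≤ ‖T‖ * ‖v‖ ^ 2 :=
  calc |⟪T v, v⟫| ≤ ‖T v‖ * ‖v‖ := abs_real_inner_le_norm _ _
    _ ≤ ‖T‖ * ‖v‖ * ‖v‖ := by gcongr; exact T.le_opNorm v
    _ = ‖T‖ * ‖v‖ ^ 2 := by ring

theorem norm_le_of_isSymmetric_of_abs_inner_apply_self_le {T : E →L[ℝ] E}
    (hT : (T : E →ₗ[ℝ] E).IsSymmetric) {C : ℝ} (hC : 0 ≤ C)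
    (h : ∀ v, |⟪T v, v⟫| ≤ C * ‖v‖ ^ 2) : ‖T‖ ≤ C := by
  rw [T.norm_eq_iSup_rayleighQuotient hT]
  refine ciSup_le fun v => ?_
  rcases eq_or_ne v 0 with rfl | hv
  · simpa using hC
  · have hv2 : 0 < ‖v‖ ^ 2 := by positivity
    rw [rayleighQuotient, reApplyInnerSelf_apply, RCLike.re_to_real, abs_div, abs_of_pos hv2,
      div_le_iff₀ hv2]
    exact h v

end ContinuousLinearMap

section Calculus

variable {E F G : Type*} [NormedAddCommGroup E] [NormedSpace ℝ E] [NormedAddCommGroup F]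
  [NormedSpace ℝ F] [NormedAddCommGroup G] [NormedSpace ℝ G]

theorem HasFDerivAt.comp_graph {g : E × F → G} {A : E →L[ℝ] G} {B : F →L[ℝ] G} {w : E → F}
    {J : E →L[ℝ] F} {x : E} (hg : HasFDerivAt g (A.coprod B) (x, w x))
    (hw : HasFDerivAt w J x) : HasFDerivAt (fun y => g (y, w y)) (A + B.comp J) x :=
  (hg.comp x ((hasFDerivAt_id x).prodMk hw)).congr_fderiv (by ext v; simp)

end Calculus

section Monotone

variable {E : Type*} [NormedAddCommGroup E] [InnerProductSpace ℝ E]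

theorem mul_norm_sub_sq_le_inner_sub_of_hasFDerivAt {F : E → E} {F' : E → E →L[ℝ] E} {m : ℝ}
    (hF : ∀ x, HasFDerivAt F (F' x) x) (hF' : ∀ x v, m * ‖v‖ ^ 2 ≤ ⟪F' x v, v⟫) (x y : E) :
    m * ‖x - y‖ ^ 2 ≤ ⟪F x - F y, x - y⟫ := by
  set v := x - y
  have hψ : ∀ t : ℝ, HasDerivAt (fun t : ℝ => ⟪F (y + t • v), v⟫) ⟪F' (y + t • v) v, v⟫ t := by
    intro t
    have hline : HasDerivAt (fun t : ℝ => y + t • v) v t := by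
      simpa using ((hasDerivAt_id t).smul_const v).const_add y
    simpa using ((hF _).comp_hasDerivAt t hline).inner ℝ (hasDerivAt_const t v)
  have h := mul_sub_le_image_sub_of_le_deriv (fun t => (hψ t).differentiableAt)
    (fun t => (hψ t).deriv ▸ hF' _ v) (zero_le_one' ℝ)
  simpa [v, inner_sub_left] using h

end Monotone

theorem stmt8_general {dθ dw : ℕ} (μ L C₁ C₂ : ℝ)
    (hμL : μ ≤ L) (hC : C₁ * C₂ ≤ μ / 2)
    -- g1 θ w = ∇₁ f(θ, w), the partial gradient of f in its first argument
    (g1 : EuclideanSpace ℝ (Fin dθ) → EuclideanSpace ℝ (Fin dw) → EuclideanSpace ℝ (Fin dθ))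
    -- H11 θ w = ∇²₁₁ f(θ, w), H12 θ w = ∇²₁₂ f(θ, w)
    (H11 : EuclideanSpace ℝ (Fin dθ) → EuclideanSpace ℝ (Fin dw) →
      (EuclideanSpace ℝ (Fin dθ) →L[ℝ] EuclideanSpace ℝ (Fin dθ)))
    (H12 : EuclideanSpace ℝ (Fin dθ) → EuclideanSpace ℝ (Fin dw) →
      (EuclideanSpace ℝ (Fin dw) →L[ℝ] EuclideanSpace ℝ (Fin dθ)))
    (wstar : EuclideanSpace ℝ (Fin dθ) → EuclideanSpace ℝ (Fin dw))
    (J : EuclideanSpace ℝ (Fin dθ) → (EuclideanSpace ℝ (Fin dθ) →L[ℝ] EuclideanSpace ℝ (Fin dw)))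
    (hJ : ∀ θ, HasFDerivAt wstar (J θ) θ)
    (hg1 : ∀ θ w, HasFDerivAt (fun p : EuclideanSpace ℝ (Fin dθ) × EuclideanSpace ℝ (Fin dw) =>
      g1 p.1 p.2) ((H11 θ w).coprod (H12 θ w)) (θ, w))
    (hHsym : ∀ θ u v, ⟪H11 θ (wstar θ) u, v⟫ = ⟪u, H11 θ (wstar θ) v⟫)
    (hstrong : ∀ θ v, ⟪H11 θ (wstar θ) v, v⟫ ≥ μ * ‖v‖ ^ 2)
    (hsmooth : ∀ θ v, ⟪H11 θ (wstar θ) v, v⟫ ≤ L * ‖v‖ ^ 2)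
    (hC1 : ∀ θ, ‖H12 θ (wstar θ)‖ ≤ C₁)
    (hC2 : ∀ θ, ‖J θ‖ ≤ C₂)
    (F : EuclideanSpace ℝ (Fin dθ) → EuclideanSpace ℝ (Fin dθ))
    (hF : ∀ θ, F θ = g1 θ (wstar θ)) :
    (∀ θ, HasFDerivAt F (H11 θ (wstar θ) + (H12 θ (wstar θ)).comp (J θ)) θ) ∧
    (∀ θ v, ⟪(H11 θ (wstar θ) + (H12 θ (wstar θ)).comp (J θ)) v, v⟫ ≥ (μ / 2) * ‖v‖ ^ 2) ∧
    (∀ θ v, ⟪(H11 θ (wstar θ) + (H12 θ (wstar θ)).comp (J θ)) v, v⟫ ≤ 2 * L * ‖v‖ ^ 2) ∧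
    (∀ θ₁ θ₂, ⟪F θ₁ - F θ₂, θ₁ - θ₂⟫ ≥ (μ / 2) * ‖θ₁ - θ₂‖ ^ 2) ∧
    (∀ θ₁ θ₂, ‖F θ₁ - F θ₂‖ ≤ 2 * L * ‖θ₁ - θ₂‖) := by
  set A := fun θ => H11 θ (wstar θ)
  set B := fun θ => (H12 θ (wstar θ)).comp (J θ)
  have hB : ∀ θ, ‖B θ‖ ≤ μ / 2 := fun θ =>
    calc ‖B θ‖ ≤ ‖H12 θ (wstar θ)‖ * ‖J θ‖ := ContinuousLinearMap.opNorm_comp_le _ _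
      _ ≤ C₁ * C₂ := mul_le_mul (hC1 θ) (hC2 θ) (norm_nonneg _) ((norm_nonneg _).trans (hC1 θ))
      _ ≤ μ / 2 := hC
  have hμ0 : 0 ≤ μ := by linarith [(norm_nonneg _).trans (hB 0)]
  have hBv : ∀ θ v, |⟪B θ v, v⟫| ≤ μ / 2 * ‖v‖ ^ 2 := fun θ v =>
    (B θ).abs_inner_apply_self_le v |>.trans (by gcongr; exact hB θ)
  have hsplit : ∀ θ v, ⟪(A θ + B θ) v, v⟫ = ⟪A θ v, v⟫ + ⟪B θ v, v⟫ := fun θ v =>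
    inner_add_left _ _ _
  have hlow : ∀ θ v, ⟪(A θ + B θ) v, v⟫ ≥ μ / 2 * ‖v‖ ^ 2 := fun θ v => by
    linarith [hsplit θ v, hstrong θ v, (abs_le.mp (hBv θ v)).1]
  have hup : ∀ θ v, ⟪(A θ + B θ) v, v⟫ ≤ 2 * L * ‖v‖ ^ 2 := fun θ v => by
    nlinarith [hsplit θ v, hsmooth θ v, (abs_le.mp (hBv θ v)).2, sq_nonneg ‖v‖]
  have hA : ∀ θ, ‖A θ‖ ≤ L := fun θ =>
    (A θ).norm_le_of_isSymmetric_of_abs_inner_apply_self_le (hHsym θ) (by linarith) fun v =>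
      abs_le.mpr ⟨by nlinarith [hstrong θ v, sq_nonneg ‖v‖], hsmooth θ v⟩
  have hderiv : ∀ θ, HasFDerivAt F (A θ + B θ) θ := fun θ => by
    simpa only [← hF] using (hg1 θ (wstar θ)).comp_graph (hJ θ)
  refine ⟨hderiv, hlow, hup, fun θ₁ θ₂ => ?_, fun θ₁ θ₂ => ?_⟩
  · exact mul_norm_sub_sq_le_inner_sub_of_hasFDerivAt hderiv hlow θ₁ θ₂
  · refine convex_univ.norm_image_sub_le_of_norm_hasFDerivWithin_le
      (fun θ _ => (hderiv θ).hasFDerivWithinAt) (fun θ _ => ?_) trivial trivial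
    calc ‖A θ + B θ‖ ≤ ‖A θ‖ + ‖B θ‖ := norm_add_le _ _
      _ ≤ 2 * L := by linarith [hA θ, hB θ]

/-- If f(θ, w) is twice differentiable, μ-strongly convex and L-smooth in θ, with
‖∇²₁₂ f(θ, w*(θ))‖ ≤ C₁ and ‖∇_θ w*(θ)‖ ≤ C₂ where C₁C₂ ≤ μ/2, then
F(θ) = ∇₁ f(θ, w*(θ)) has Jacobian ∇²₁₁ f + ∇_θ w* ∘ ∇²₁₂ f satisfying
(μ/2)I ⪯ ∇F(θ) ⪯ 2L·I, hence F is (μ/2)-strongly monotone and (2L)-Lipschitz. -/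
theorem stmt8 {dθ dw : ℕ} (μ L C₁ C₂ : ℝ)
    (hμ : 0 < μ) (hμL : μ ≤ L) (hC : C₁ * C₂ ≤ μ / 2) (hC₁ : 0 ≤ C₁) (hC₂ : 0 ≤ C₂)
    -- g1 θ w = ∇₁ f(θ, w), the partial gradient of f in its first argument
    (g1 : EuclideanSpace ℝ (Fin dθ) → EuclideanSpace ℝ (Fin dw) → EuclideanSpace ℝ (Fin dθ))
    -- H11 θ w = ∇²₁₁ f(θ, w), H12 θ w = ∇²₁₂ f(θ, w)
    (H11 : EuclideanSpace ℝ (Fin dθ) → EuclideanSpace ℝ (Fin dw) →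
      (EuclideanSpace ℝ (Fin dθ) →L[ℝ] EuclideanSpace ℝ (Fin dθ)))
    (H12 : EuclideanSpace ℝ (Fin dθ) → EuclideanSpace ℝ (Fin dw) →
      (EuclideanSpace ℝ (Fin dw) →L[ℝ] EuclideanSpace ℝ (Fin dθ)))
    (wstar : EuclideanSpace ℝ (Fin dθ) → EuclideanSpace ℝ (Fin dw))
    (J : EuclideanSpace ℝ (Fin dθ) → (EuclideanSpace ℝ (Fin dθ) →L[ℝ] EuclideanSpace ℝ (Fin dw)))
    (hJ : ∀ θ, HasFDerivAt wstar (J θ) θ)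
    (hg1 : ∀ θ w, HasFDerivAt (fun p : EuclideanSpace ℝ (Fin dθ) × EuclideanSpace ℝ (Fin dw) =>
      g1 p.1 p.2) ((H11 θ w).coprod (H12 θ w)) (θ, w))
    (hHsym : ∀ θ u v, ⟪H11 θ (wstar θ) u, v⟫ = ⟪u, H11 θ (wstar θ) v⟫)
    (hstrong : ∀ θ v, ⟪H11 θ (wstar θ) v, v⟫ ≥ μ * ‖v‖ ^ 2)
    (hsmooth : ∀ θ v, ⟪H11 θ (wstar θ) v, v⟫ ≤ L * ‖v‖ ^ 2)
    (hC1 : ∀ θ, ‖H12 θ (wstar θ)‖ ≤ C₁)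
    (hC2 : ∀ θ, ‖J θ‖ ≤ C₂)
    (F : EuclideanSpace ℝ (Fin dθ) → EuclideanSpace ℝ (Fin dθ))
    (hF : ∀ θ, F θ = g1 θ (wstar θ)) :
    (∀ θ, HasFDerivAt F (H11 θ (wstar θ) + (H12 θ (wstar θ)).comp (J θ)) θ) ∧
    (∀ θ v, ⟪(H11 θ (wstar θ) + (H12 θ (wstar θ)).comp (J θ)) v, v⟫ ≥ (μ / 2) * ‖v‖ ^ 2) ∧
    (∀ θ v, ⟪(H11 θ (wstar θ) + (H12 θ (wstar θ)).comp (J θ)) v, v⟫ ≤ 2 * L * ‖v‖ ^ 2) ∧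
    (∀ θ₁ θ₂, ⟪F θ₁ - F θ₂, θ₁ - θ₂⟫ ≥ (μ / 2) * ‖θ₁ - θ₂‖ ^ 2) ∧
    (∀ θ₁ θ₂, ‖F θ₁ - F θ₂‖ ≤ 2 * L * ‖θ₁ - θ₂‖) :=
  stmt8_general μ L C₁ C₂ hμL hC g1 H11 H12 wstar J hJ hg1 hHsym hstrong hsmooth hC1 hC2 F hF
end

section
/- In the asynchronous iteration with virtual iterates, define θ^{r+1} = θ^r − γ F_{j_r}(θ^{Prev(j_r, r)}) and θ̂^{r+1} = θ̂^r − γ F_{m_r}(θ^r), with initialization θ̂⁰ = θ⁰ − ∑_{m ∈ C⁰} γ F_m(θ⁰) and active set updated by C^{r+1} = {m_r} ∪ (C^r \ {j_r}). Then for every r, θ^r − θ̂^r = ∑_{m ∈ C^r} γ F_m(θ^{Prev(m, r)}). -/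
/-- Virtual iterates for the asynchronous iteration: with
θ^{r+1} = θ^r − γ F_{j_r}(θ^{Prev(j_r, r)}), θ̂^{r+1} = θ̂^r − γ F_{m_r}(θ^r),
θ̂⁰ = θ⁰ − ∑_{m∈C⁰} γ F_m(θ⁰), and C^{r+1} = {m_r} ∪ (C^r \ {j_r}), one has
θ^r − θ̂^r = ∑_{m∈C^r} γ F_m(θ^{Prev(m, r)}) for every r. -/
theorem stmt17 {d : ℕ} {ι : Type*} [DecidableEq ι] (γ : ℝ)
    (F : ι → EuclideanSpace ℝ (Fin d) → EuclideanSpace ℝ (Fin d))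
    (θ θhat : ℕ → EuclideanSpace ℝ (Fin d))
    (C : ℕ → Finset ι)
    (j ms : ℕ → ι)            -- j r finishes at round r; ms r is the newly sampled client
    (Prev : ι → ℕ → ℕ)
    (hj : ∀ r, j r ∈ C r)
    (hms : ∀ r, ms r ∉ (C r).erase (j r))
    (hC : ∀ r, C (r + 1) = insert (ms r) ((C r).erase (j r)))
    (hPrev0 : ∀ m ∈ C 0, Prev m 0 = 0)
    (hPrevNew : ∀ r, Prev (ms r) (r + 1) = r)
    (hPrevOld : ∀ r, ∀ m ∈ (C r).erase (j r), Prev m (r + 1) = Prev m r)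
    (hθ : ∀ r, θ (r + 1) = θ r - γ • F (j r) (θ (Prev (j r) r)))
    (hθhat : ∀ r, θhat (r + 1) = θhat r - γ • F (ms r) (θ r))
    (hinit : θhat 0 = θ 0 - ∑ m ∈ C 0, γ • F m (θ 0)) :
    ∀ r, θ r - θhat r = ∑ m ∈ C r, γ • F m (θ (Prev m r)) := by
  intro r
  induction r with
  | zero =>
      rw [hinit]
      have : θ 0 - (θ 0 - ∑ m ∈ C 0, γ • F m (θ 0)) = ∑ m ∈ C 0, γ • F m (θ 0) := by abel
      rw [this]
      exact Finset.sum_congr rfl fun m hm => by rw [hPrev0 m hm]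
  | succ r ih =>
      rw [hθ r, hθhat r, hC r, Finset.sum_insert (hms r), hPrevNew r]
      have hsum : ∑ m ∈ (C r).erase (j r), γ • F m (θ (Prev m (r+1)))
          = ∑ m ∈ (C r).erase (j r), γ • F m (θ (Prev m r)) :=
        Finset.sum_congr rfl fun m hm => by rw [hPrevOld r m hm]
      rw [hsum]
      have hsplit : ∑ m ∈ C r, γ • F m (θ (Prev m r))
          = γ • F (j r) (θ (Prev (j r) r)) + ∑ m ∈ (C r).erase (j r), γ • F m (θ (Prev m r)) :=
        (Finset.add_sum_erase _ _ (hj r)).symm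
      rw [hsplit] at ih
      rw [show θ r - γ • F (j r) (θ (Prev (j r) r)) - (θhat r - γ • F (ms r) (θ r))
          = (θ r - θhat r) - γ • F (j r) (θ (Prev (j r) r)) + γ • F (ms r) (θ r) by abel, ih]
      abel
end
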